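/- There exists a constant C = C(m, C0) such that for all integers L, l ≥ 0 and 0 ≤ K < 2^L: Σ_{k=0}^{2^l−1} |∫_0^1 ψ_{LK}(x)·ψ_{lk}(x)/M0(x) dx| ≤ C·2^{−|l−L|/2}. -/

import Mathlib

open MeasureTheory Real Set

noncomputable section

/-- The Haar mother wavelet `ψ = 1_{(0,1/2]} − 1_{(1/2,1]}`. -/
def haarMother (x : ℝ) : ℝ :=
  (Set.Ioc (0:ℝ) (1/2)).indicator (fun _ => (1:ℝ)) x
    - (Set.Ioc (1/2:ℝ) 1).indicator (fun _ => (1:ℝ)) x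

/-- The Haar wavelet `ψ_{lk}(x) = 2^{l/2} ψ(2^l x − k)`. -/
def haarPsi (l k : ℕ) (x : ℝ) : ℝ :=
  (2:ℝ) ^ ((l:ℝ) / 2) * haarMother ((2:ℝ) ^ l * x - k)

/-- The dyadic interval `I^l_k = (k 2^{−l}, (k+1) 2^{−l}]`. -/
def dyadicI (l k : ℕ) : Set ℝ := Set.Ioc ((k:ℝ) / 2 ^ l) (((k:ℝ) + 1) / 2 ^ l)

/-- `f ∈ V_L`: `f` is constant on each dyadic interval `I^{L+1}_j`, `0 ≤ j < 2^{L+1}`. -/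
def MemV (L : ℕ) (f : ℝ → ℝ) : Prop :=
  ∀ j < 2 ^ (L + 1), ∀ x ∈ dyadicI (L + 1) j, ∀ y ∈ dyadicI (L + 1) j, f x = f y

/-- The `L²`-orthogonal projection onto `V_L`: on each dyadic interval `I^{L+1}_j`,
`(P_L f)(x)` is the average `2^{L+1} ∫_{I^{L+1}_j} f`. -/
def dyadicProj (L : ℕ) (f : ℝ → ℝ) (x : ℝ) : ℝ :=
  (2:ℝ) ^ (L + 1) *
    ∫ t in (((⌈(2:ℝ) ^ (L + 1) * x⌉ - 1 : ℤ) : ℝ) / 2 ^ (L + 1))..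
        (((⌈(2:ℝ) ^ (L + 1) * x⌉ : ℤ) : ℝ) / 2 ^ (L + 1)), f t

/-- The multiscale metric
`ℓ∞(f,g) = |⟨f−g, φ⟩| + Σ_{l≥0} 2^{l/2} max_{0≤k<2^l} |⟨f−g, ψ_{lk}⟩|`. -/
def ellInfinity (f g : ℝ → ℝ) : ℝ :=
  |∫ x in (0:ℝ)..1, (f x - g x)| +
    ∑' l : ℕ, (2:ℝ) ^ ((l:ℝ) / 2) *
      ⨆ k : Fin (2 ^ l), |∫ x in (0:ℝ)..1, (f x - g x) * haarPsi l k x|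

/-- The Hölder ball `H(β,D)` on `[0,1]` (for `0 < β ≤ 1`). -/
def HolderC (β D : ℝ) (f : ℝ → ℝ) : Prop :=
  ∀ x ∈ Set.Icc (0:ℝ) 1, ∀ y ∈ Set.Icc (0:ℝ) 1, |f x - f y| ≤ D * |x - y| ^ β

/-! For `l ≤ L` the interval `I^L_K` lies inside a single `I^l_{k₀}`, so only one term of
the sum survives, and it is at most
`sup |ψ_{LK}| · sup |ψ_{lk₀} / M0| · |I^L_K| = 2^{(l-L)/2} / m`.
For `l > L` the wavelet `ψ_{LK}` is constant on every `I^l_k`, so each term is `|ψ_{LK}|` times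
a Haar coefficient of the Lipschitz function `1 / M0`. Shifting the left half of `I^l_k` onto
the right half by `2^{-(l+1)}` bounds that coefficient by `C0 · 2^{l/2} · 4^{-(l+1)}`, and the
`2^l` terms add up to `C0 / 4 · 2^{(L-l)/2}`. -/

open scoped NNReal

lemma two_rpow_neg_abs_sub_div_two {a b : ℕ} (h : a ≤ b) :
    (2:ℝ) ^ (-(|(a:ℝ) - b| / 2)) = 2 ^ ((a:ℝ) / 2) * 2 ^ ((b:ℝ) / 2) / 2 ^ b := by
  rw [abs_of_nonpos (by simpa using h), ← rpow_natCast, ← rpow_add two_pos,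
    ← rpow_sub two_pos]
  ring_nf

section Dyadic

lemma mem_dyadicI_iff {l k : ℕ} {x : ℝ} :
    x ∈ dyadicI l k ↔ (k:ℝ) < 2 ^ l * x ∧ 2 ^ l * x ≤ k + 1 := by
  have hp : (0:ℝ) < 2 ^ l := by positivity
  rw [dyadicI, mem_Ioc, div_lt_iff₀ hp, le_div_iff₀ hp, mul_comm x]

lemma dyadicI_eq_Ioc_add (n j : ℕ) :
    dyadicI n j = Ioc ((j:ℝ) / 2 ^ n) ((j:ℝ) / 2 ^ n + (2 ^ n)⁻¹) := by
  rw [dyadicI, add_div, one_div]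

lemma measurableSet_dyadicI {n j : ℕ} : MeasurableSet (dyadicI n j) := measurableSet_Ioc

lemma volume_real_dyadicI (n j : ℕ) : volume.real (dyadicI n j) = (2 ^ n)⁻¹ := by
  rw [dyadicI_eq_Ioc_add, Real.volume_real_Ioc, add_sub_cancel_left, max_eq_left (by positivity)]

lemma dyadicI_subset_Ioc {n k : ℕ} (hk : k < 2 ^ n) : dyadicI n k ⊆ Ioc (0:ℝ) 1 := by
  apply Ioc_subset_Ioc (by positivity)
  rw [div_le_one (by positivity)]
  exact_mod_cast hk

lemma eq_of_mem_dyadicI {n j j' : ℕ} {x : ℝ} (h : x ∈ dyadicI n j) (h' : x ∈ dyadicI n j') :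
    j = j' := by
  rw [mem_dyadicI_iff] at h h'
  have h1 : j < j' + 1 := by exact_mod_cast (by linarith : (j:ℝ) < j' + 1)
  have h2 : j' < j + 1 := by exact_mod_cast (by linarith : (j':ℝ) < j + 1)
  omega

lemma dyadicI_subset_dyadicI {n N : ℕ} (h : n ≤ N) (k : ℕ) :
    dyadicI N k ⊆ dyadicI n (k / 2 ^ (N - n)) := by
  intro x hx
  obtain ⟨d, rfl⟩ := Nat.exists_eq_add_of_le h
  rw [Nat.add_sub_cancel_left]
  have hqr := Nat.div_add_mod k (2 ^ d)
  have hr : k % 2 ^ d + 1 ≤ 2 ^ d := Nat.mod_lt _ (by positivity)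
  set q := k / 2 ^ d
  set r := k % 2 ^ d
  have hk : (k:ℝ) = 2 ^ d * q + r := by exact_mod_cast hqr.symm
  have hr' : (r:ℝ) + 1 ≤ 2 ^ d := by exact_mod_cast hr
  have hd : (0:ℝ) < 2 ^ d := by positivity
  rw [mem_dyadicI_iff, pow_add] at hx
  rw [mem_dyadicI_iff]
  constructor <;> nlinarith [(Nat.cast_nonneg r : (0:ℝ) ≤ r)]

lemma dyadicI_eq_union (l k : ℕ) :
    dyadicI l k = dyadicI (l + 1) (2 * k) ∪ dyadicI (l + 1) (2 * k + 1) := by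
  ext x
  simp only [mem_union, mem_dyadicI_iff, pow_succ]
  push_cast
  constructor
  · rintro ⟨h1, h2⟩
    by_cases h : 2 ^ l * 2 * x ≤ 2 * k + 1
    · exact Or.inl ⟨by linarith, h⟩
    · exact Or.inr ⟨by linarith, by linarith⟩
  · rintro (⟨h1, h2⟩ | ⟨h1, h2⟩) <;> constructor <;> linarith

end Dyadic

section Haar

lemma mem_dyadicI_two_mul_iff {l k : ℕ} {x : ℝ} :
    x ∈ dyadicI (l + 1) (2 * k) ↔ (2:ℝ) ^ l * x - k ∈ Ioc 0 (1 / 2) := by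
  simp only [mem_dyadicI_iff, mem_Ioc, pow_succ]
  push_cast
  constructor <;> rintro ⟨h1, h2⟩ <;> constructor <;> linarith

lemma mem_dyadicI_two_mul_add_one_iff {l k : ℕ} {x : ℝ} :
    x ∈ dyadicI (l + 1) (2 * k + 1) ↔ (2:ℝ) ^ l * x - k ∈ Ioc (1 / 2) 1 := by
  simp only [mem_dyadicI_iff, mem_Ioc, pow_succ]
  push_cast
  constructor <;> rintro ⟨h1, h2⟩ <;> constructor <;> linarith

lemma haarPsi_eq_indicator_sub_indicator (l k : ℕ) (x : ℝ) :
    haarPsi l k x = 2 ^ ((l:ℝ) / 2) *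
      ((dyadicI (l + 1) (2 * k)).indicator (fun _ => (1:ℝ)) x
        - (dyadicI (l + 1) (2 * k + 1)).indicator (fun _ => (1:ℝ)) x) := by
  classical
  simp only [haarPsi, haarMother, indicator_apply, mem_dyadicI_two_mul_iff,
    mem_dyadicI_two_mul_add_one_iff]

lemma haarPsi_of_mem_left {l k : ℕ} {x : ℝ} (hx : x ∈ dyadicI (l + 1) (2 * k)) :
    haarPsi l k x = 2 ^ ((l:ℝ) / 2) := by
  have hx' : x ∉ dyadicI (l + 1) (2 * k + 1) := fun h => by
    have := eq_of_mem_dyadicI hx h; omega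
  rw [haarPsi_eq_indicator_sub_indicator, indicator_of_mem hx, indicator_of_notMem hx']
  simp

lemma haarPsi_of_mem_right {l k : ℕ} {x : ℝ} (hx : x ∈ dyadicI (l + 1) (2 * k + 1)) :
    haarPsi l k x = -2 ^ ((l:ℝ) / 2) := by
  have hx' : x ∉ dyadicI (l + 1) (2 * k) := fun h => by
    have := eq_of_mem_dyadicI hx h; omega
  rw [haarPsi_eq_indicator_sub_indicator, indicator_of_mem hx, indicator_of_notMem hx']
  simp

lemma haarPsi_eq_zero_of_notMem {l k : ℕ} {x : ℝ} (hx : x ∉ dyadicI l k) :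
    haarPsi l k x = 0 := by
  rw [dyadicI_eq_union, mem_union, not_or] at hx
  rw [haarPsi_eq_indicator_sub_indicator, indicator_of_notMem hx.1, indicator_of_notMem hx.2]
  simp

lemma abs_haarPsi_le (l k : ℕ) (x : ℝ) : |haarPsi l k x| ≤ 2 ^ ((l:ℝ) / 2) := by
  have hpos : (0:ℝ) < 2 ^ ((l:ℝ) / 2) := by positivity
  by_cases hL : x ∈ dyadicI (l + 1) (2 * k)
  · rw [haarPsi_of_mem_left hL, abs_of_pos hpos]
  by_cases hR : x ∈ dyadicI (l + 1) (2 * k + 1)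
  · rw [haarPsi_of_mem_right hR, abs_neg, abs_of_pos hpos]
  rw [haarPsi_eq_zero_of_notMem (by rw [dyadicI_eq_union]; exact fun h => h.elim hL hR), abs_zero]
  exact hpos.le

lemma haarPsi_eq_of_mem_dyadicI {L K l k : ℕ} (hLl : L < l) {x y : ℝ}
    (hx : x ∈ dyadicI l k) (hy : y ∈ dyadicI l k) : haarPsi L K x = haarPsi L K y := by
  have hsub := dyadicI_subset_dyadicI hLl k
  have hmem : ∀ j, x ∈ dyadicI (L + 1) j ↔ y ∈ dyadicI (L + 1) j := fun j =>
    ⟨fun h => eq_of_mem_dyadicI h (hsub hx) ▸ hsub hy,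
      fun h => eq_of_mem_dyadicI h (hsub hy) ▸ hsub hx⟩
  classical
  simp only [haarPsi_eq_indicator_sub_indicator, indicator_apply, hmem]

lemma haarPsi_mul_haarPsi_eq_zero {L K l k : ℕ} (hlL : l ≤ L) (hk : k ≠ K / 2 ^ (L - l))
    (x : ℝ) :
    haarPsi L K x * haarPsi l k x = 0 := by
  by_cases hx : x ∈ dyadicI L K
  · rw [haarPsi_eq_zero_of_notMem fun hx' =>
      hk (eq_of_mem_dyadicI hx' (dyadicI_subset_dyadicI hlL K hx)), mul_zero]
  · rw [haarPsi_eq_zero_of_notMem hx, zero_mul]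

end Haar

section Integrals

lemma intervalIntegral_haarPsi_mul {l k : ℕ} (hk : k < 2 ^ l) (f : ℝ → ℝ) :
    ∫ x in (0:ℝ)..1, haarPsi l k x * f x = ∫ x in dyadicI l k, haarPsi l k x * f x := by
  rw [intervalIntegral.integral_of_le zero_le_one]
  exact setIntegral_eq_of_subset_of_forall_sdiff_eq_zero measurableSet_Ioc
    (dyadicI_subset_Ioc hk) fun x hx => by rw [haarPsi_eq_zero_of_notMem hx.2, zero_mul]

lemma abs_setIntegral_haarPsi_mul_le {l k : ℕ} {f : ℝ → ℝ} {B : ℝ}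
    (hf : ∀ x ∈ dyadicI l k, |f x| ≤ B) :
    |∫ x in dyadicI l k, haarPsi l k x * f x| ≤ 2 ^ ((l:ℝ) / 2) * B / 2 ^ l := by
  have := norm_setIntegral_le_of_norm_le_const (μ := volume)
    (f := fun x => haarPsi l k x * f x) (s := dyadicI l k) measure_Ioc_lt_top fun x hx => by
      rw [Real.norm_eq_abs, abs_mul]
      exact mul_le_mul (abs_haarPsi_le l k x) (hf x hx) (abs_nonneg _) (by positivity)
  rwa [volume_real_dyadicI, ← div_eq_mul_inv] at this

lemma setIntegral_haarPsi_mul_eq {l k : ℕ} {g : ℝ → ℝ} (hg : Continuous g) :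
    ∫ x in dyadicI l k, haarPsi l k x * g x = 2 ^ ((l:ℝ) / 2) *
      ((∫ x in dyadicI (l + 1) (2 * k), g x) - ∫ x in dyadicI (l + 1) (2 * k + 1), g x) := by
  have hdisj : Disjoint (dyadicI (l + 1) (2 * k)) (dyadicI (l + 1) (2 * k + 1)) :=
    disjoint_left.2 fun x h h' => by have := eq_of_mem_dyadicI h h'; omega
  have hgi : ∀ j, IntegrableOn g (dyadicI (l + 1) j) := fun _ => hg.integrableOn_Ioc
  have hL : EqOn (fun x => haarPsi l k x * g x) (fun x => 2 ^ ((l:ℝ) / 2) * g x)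
      (dyadicI (l + 1) (2 * k)) := fun x hx => by simp only [haarPsi_of_mem_left hx]
  have hR : EqOn (fun x => haarPsi l k x * g x) (fun x => -(2 ^ ((l:ℝ) / 2) * g x))
      (dyadicI (l + 1) (2 * k + 1)) := fun x hx => by
    simp only [haarPsi_of_mem_right hx, neg_mul]
  rw [dyadicI_eq_union, setIntegral_union hdisj measurableSet_dyadicI
      (IntegrableOn.congr_fun ((hgi _).const_mul _) hL.symm measurableSet_dyadicI)
      (IntegrableOn.congr_fun ((hgi _).const_mul _).neg hR.symm measurableSet_dyadicI),
    setIntegral_congr_fun measurableSet_dyadicI hL, setIntegral_congr_fun measurableSet_dyadicI hR,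
    integral_neg, integral_const_mul, integral_const_mul]
  ring

lemma abs_setIntegral_Ioc_sub_setIntegral_Ioc_add_le {g : ℝ → ℝ} {K : ℝ≥0}
    (hg : LipschitzWith K g) (a : ℝ) {δ : ℝ} (hδ : 0 ≤ δ) :
    |(∫ x in Ioc a (a + δ), g x) - ∫ x in Ioc (a + δ) (a + δ + δ), g x| ≤ K * δ ^ 2 := by
  have hc := hg.continuous
  rw [← intervalIntegral.integral_of_le (by linarith),
    ← intervalIntegral.integral_of_le (by linarith), ← intervalIntegral.integral_comp_add_right,
    ← intervalIntegral.integral_sub (hc.intervalIntegrable _ _)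
      ((by fun_prop : Continuous fun x => g (x + δ)).intervalIntegrable _ _)]
  have := intervalIntegral.norm_integral_le_of_norm_le_const (a := a) (b := a + δ)
    (f := fun x => g x - g (x + δ)) fun x _ => by
      simpa [← dist_eq_norm, abs_of_nonneg hδ] using hg.dist_le_mul x (x + δ)
  simpa [abs_of_nonneg hδ, sq, mul_assoc] using this

lemma abs_setIntegral_haarPsi_mul_le_of_lipschitzOnWith {l k : ℕ} {g : ℝ → ℝ} {K : ℝ≥0}
    (hg : LipschitzOnWith K g (dyadicI l k)) :
    |∫ x in dyadicI l k, haarPsi l k x * g x| ≤ K * 2 ^ ((l:ℝ) / 2) / 2 ^ (2 * l + 2) := by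
  obtain ⟨g', hg', hgg'⟩ := hg.extend_real
  have hmid : ((2 * k + 1 : ℕ) : ℝ) / 2 ^ (l + 1)
      = ((2 * k : ℕ) : ℝ) / 2 ^ (l + 1) + (2 ^ (l + 1))⁻¹ := by
    push_cast
    ring
  have hext : EqOn (fun x => haarPsi l k x * g x) (fun x => haarPsi l k x * g' x) (dyadicI l k) :=
    fun x hx => by simp only [hgg' hx]
  rw [setIntegral_congr_fun measurableSet_dyadicI hext, setIntegral_haarPsi_mul_eq hg'.continuous,
    dyadicI_eq_Ioc_add, dyadicI_eq_Ioc_add, hmid, abs_mul, abs_of_pos (by positivity)]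
  calc (2:ℝ) ^ ((l:ℝ) / 2) * |_| ≤ 2 ^ ((l:ℝ) / 2) * (K * ((2 ^ (l + 1))⁻¹) ^ 2) := by
        gcongr
        exact abs_setIntegral_Ioc_sub_setIntegral_Ioc_add_le hg' _ (by positivity)
    _ = (K:ℝ) * 2 ^ ((l:ℝ) / 2) / 2 ^ (2 * l + 2) := by
        field_simp
        ring

end Integrals

section Coefficients

variable {M0 : ℝ → ℝ} {L l K : ℕ}

lemma sum_abs_integral_haarPsi_mul_haarPsi_div_le_of_le {m : ℝ} (hm : 0 < m)
    (hM0 : ∀ u ∈ Icc (0:ℝ) 1, m ≤ M0 u) (hlL : l ≤ L) (hK : K < 2 ^ L) :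
    ∑ k ∈ Finset.range (2 ^ l), |∫ x in (0:ℝ)..1, haarPsi L K x * haarPsi l k x / M0 x|
      ≤ 1 / m * 2 ^ (-(|(l:ℝ) - L| / 2)) := by
  have hk₀ : K / 2 ^ (L - l) < 2 ^ l :=
    Nat.div_lt_of_lt_mul (by rwa [← pow_add, Nat.sub_add_cancel hlL])
  rw [Finset.sum_eq_single_of_mem _ (Finset.mem_range.2 hk₀) fun k _ hk => by
    simp [haarPsi_mul_haarPsi_eq_zero hlL hk]]
  simp_rw [mul_div_assoc]
  rw [intervalIntegral_haarPsi_mul hK, two_rpow_neg_abs_sub_div_two hlL]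
  calc _ ≤ 2 ^ ((L:ℝ) / 2) * (2 ^ ((l:ℝ) / 2) / m) / 2 ^ L :=
        abs_setIntegral_haarPsi_mul_le fun x hx => by
          have hm0 := hM0 x (Ioc_subset_Icc_self (dyadicI_subset_Ioc hK hx))
          rw [abs_div, abs_of_pos (hm.trans_le hm0)]
          exact div_le_div₀ (by positivity) (abs_haarPsi_le _ _ _) hm hm0
    _ = _ := by ring

lemma sum_abs_integral_haarPsi_mul_haarPsi_div_le_of_lt {C : ℝ≥0}
    (hM0 : LipschitzOnWith C (fun u => 1 / M0 u) (Icc 0 1)) (hLl : L < l) :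
    ∑ k ∈ Finset.range (2 ^ l), |∫ x in (0:ℝ)..1, haarPsi L K x * haarPsi l k x / M0 x|
      ≤ C / 4 * 2 ^ (-(|(l:ℝ) - L| / 2)) := by
  rw [abs_sub_comm, two_rpow_neg_abs_sub_div_two hLl.le]
  calc _ ≤ ∑ k ∈ Finset.range (2 ^ l),
        (2:ℝ) ^ ((L:ℝ) / 2) * (C * 2 ^ ((l:ℝ) / 2) / 2 ^ (2 * l + 2)) :=
        Finset.sum_le_sum fun k hk => ?_
    _ = (C:ℝ) / 4 * (2 ^ ((L:ℝ) / 2) * 2 ^ ((l:ℝ) / 2) / 2 ^ l) := by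
        rw [Finset.sum_const, Finset.card_range, nsmul_eq_mul]
        push_cast
        field_simp
        ring
  have hk : k < 2 ^ l := Finset.mem_range.1 hk
  have hb : ((k:ℝ) + 1) / 2 ^ l ∈ dyadicI l k :=
    right_mem_Ioc.2 (div_lt_div_of_pos_right (by linarith) (by positivity))
  have hconst : EqOn (fun x => haarPsi l k x * (haarPsi L K x / M0 x))
      (fun x => haarPsi L K (((k:ℝ) + 1) / 2 ^ l) * (haarPsi l k x * (1 / M0 x)))
      (dyadicI l k) :=
    fun x hx => by simp only [haarPsi_eq_of_mem_dyadicI hLl hx hb]; ring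
  simp_rw [mul_comm (haarPsi L K _), mul_div_assoc]
  rw [intervalIntegral_haarPsi_mul hk, setIntegral_congr_fun measurableSet_dyadicI hconst,
    integral_const_mul, abs_mul]
  gcongr
  · exact abs_haarPsi_le _ _ _
  · exact (abs_setIntegral_haarPsi_mul_le_of_lipschitzOnWith
      (hM0.mono ((dyadicI_subset_Ioc hk).trans Ioc_subset_Icc_self))).trans_eq
      (mul_div_assoc _ _ _)

end Coefficients

theorem haar_coeff_sum_of_psiLK_div_M0_general
    (m C0 : ℝ) (hm : 0 < m) :
    ∃ C : ℝ, 0 < C ∧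
      ∀ M0 : ℝ → ℝ, Measurable M0 →
        (∀ u ∈ Set.Icc (0:ℝ) 1, m ≤ M0 u ∧ M0 u ≤ 1) →
        LipschitzOnWith (Real.toNNReal C0) (fun u => 1 / M0 u) (Set.Icc 0 1) →
        ∀ L l K : ℕ, K < 2 ^ L →
          (∑ k ∈ Finset.range (2 ^ l),
              |∫ x in (0:ℝ)..1, haarPsi L K x * haarPsi l k x / M0 x|)
            ≤ C * (2:ℝ) ^ (-(|(l:ℝ) - (L:ℝ)| / 2)) := by
  refine ⟨1 / m + C0.toNNReal, by positivity, fun M0 _ hM0 hLip L l K hK => ?_⟩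
  have hm' : 0 < 1 / m := by positivity
  have hC0 : (0:ℝ) ≤ C0.toNNReal := NNReal.coe_nonneg _
  rcases le_or_gt l L with hlL | hLl
  · refine (sum_abs_integral_haarPsi_mul_haarPsi_div_le_of_le hm (fun u hu => (hM0 u hu).1) hlL
      hK).trans ?_
    gcongr
    linarith
  · refine (sum_abs_integral_haarPsi_mul_haarPsi_div_le_of_lt hLip hLl).trans ?_
    gcongr
    linarith

/-- Summed coefficient bound: `Σ_{k<2^l} |∫_0^1 ψ_{LK} ψ_{lk} / M0| ≤ C 2^{−|l−L|/2}`, with a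
constant depending only on the lower bound `m` of `M0` and the Lipschitz constant `C0` of
`1/M0`. -/
theorem haar_coeff_sum_of_psiLK_div_M0
    (m C0 : ℝ) (hm : 0 < m) (hC0 : 0 < C0) :
    ∃ C : ℝ, 0 < C ∧
      ∀ M0 : ℝ → ℝ, Measurable M0 →
        (∀ u ∈ Set.Icc (0:ℝ) 1, m ≤ M0 u ∧ M0 u ≤ 1) →
        LipschitzOnWith (Real.toNNReal C0) (fun u => 1 / M0 u) (Set.Icc 0 1) →
        ∀ L l K : ℕ, K < 2 ^ L →
          (∑ k ∈ Finset.range (2 ^ l),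
              |∫ x in (0:ℝ)..1, haarPsi L K x * haarPsi l k x / M0 x|)
            ≤ C * (2:ℝ) ^ (-(|(l:ℝ) - (L:ℝ)| / 2)) :=
  haar_coeff_sum_of_psiLK_div_M0_general m C0 hm
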